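/- arXiv:2204.04087 — 9 statements merged into one kernel-verified Lean document; each statement's English description precedes it below -/
import Mathlib

section
/- Let X be a compact topological space and let G_X = LocallyConstant X ℚ. Write f ≪ g iff f = g or f(x) < g(x) for all x ∈ X. Then G_X has the Riesz interpolation property for ≪: for all f₀, f₁, g₀, g₁ ∈ G_X with fᵢ ≪ gⱼ for all i, j ∈ {0,1}, there exists h ∈ G_X with fᵢ ≪ h ≪ gⱼ for all i, j ∈ {0,1}. -/
/-- Riesz interpolation for the strict order `≪` on `LocallyConstant X ℚ`, `X` compact:
here `f ≪ g` iff `f = g ∨ ∀ x, f x < g x`. -/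
theorem stmt1 (X : Type*) [TopologicalSpace X] [CompactSpace X]
    (f₀ f₁ g₀ g₁ : LocallyConstant X ℚ)
    (h₀₀ : f₀ = g₀ ∨ ∀ x, f₀ x < g₀ x)
    (h₀₁ : f₀ = g₁ ∨ ∀ x, f₀ x < g₁ x)
    (h₁₀ : f₁ = g₀ ∨ ∀ x, f₁ x < g₀ x)
    (h₁₁ : f₁ = g₁ ∨ ∀ x, f₁ x < g₁ x) :
    ∃ h : LocallyConstant X ℚ,
      (f₀ = h ∨ ∀ x, f₀ x < h x) ∧ (f₁ = h ∨ ∀ x, f₁ x < h x) ∧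
      (h = g₀ ∨ ∀ x, h x < g₀ x) ∧ (h = g₁ ∨ ∀ x, h x < g₁ x) := by
  rcases h₀₀ with rfl | h₀₀
  · exact ⟨f₀, Or.inl rfl, h₁₀, Or.inl rfl, h₀₁⟩
  rcases h₀₁ with rfl | h₀₁
  · exact ⟨f₀, Or.inl rfl, h₁₁, Or.inr h₀₀, Or.inl rfl⟩
  rcases h₁₀ with rfl | h₁₀
  · exact ⟨f₁, Or.inr h₀₀, Or.inl rfl, Or.inl rfl, h₁₁⟩
  rcases h₁₁ with rfl | h₁₁
  · exact ⟨f₁, Or.inr h₀₁, Or.inl rfl, Or.inr h₁₀, Or.inl rfl⟩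
  refine ⟨⟨fun x => (max (f₀ x) (f₁ x) + min (g₀ x) (g₁ x)) / 2, ?_⟩, ?_, ?_, ?_, ?_⟩
  · exact IsLocallyConstant.comp₂
      (IsLocallyConstant.comp₂ f₀.isLocallyConstant f₁.isLocallyConstant max)
      (IsLocallyConstant.comp₂ g₀.isLocallyConstant g₁.isLocallyConstant min)
      (fun a b => (a + b) / 2)
  · refine Or.inr fun x => ?_
    have h1 : f₀ x ≤ max (f₀ x) (f₁ x) := le_max_left _ _
    have h2 : max (f₀ x) (f₁ x) < min (g₀ x) (g₁ x) := by
      simp only [max_lt_iff, lt_min_iff]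
      exact ⟨⟨h₀₀ x, h₁₀ x⟩, h₀₁ x, h₁₁ x⟩
    show f₀ x < (max (f₀ x) (f₁ x) + min (g₀ x) (g₁ x)) / 2
    linarith [h1, h2]
  · refine Or.inr fun x => ?_
    have h1 : f₁ x ≤ max (f₀ x) (f₁ x) := le_max_right _ _
    have h2 : max (f₀ x) (f₁ x) < min (g₀ x) (g₁ x) := by
      simp only [max_lt_iff, lt_min_iff]
      exact ⟨⟨h₀₀ x, h₁₀ x⟩, h₀₁ x, h₁₁ x⟩
    show f₁ x < (max (f₀ x) (f₁ x) + min (g₀ x) (g₁ x)) / 2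
    linarith [h1, h2]
  · refine Or.inr fun x => ?_
    have h1 : min (g₀ x) (g₁ x) ≤ g₀ x := min_le_left _ _
    have h2 : max (f₀ x) (f₁ x) < min (g₀ x) (g₁ x) := by
      simp only [max_lt_iff, lt_min_iff]
      exact ⟨⟨h₀₀ x, h₁₀ x⟩, h₀₁ x, h₁₁ x⟩
    show (max (f₀ x) (f₁ x) + min (g₀ x) (g₁ x)) / 2 < g₀ x
    linarith [h1, h2]
  · refine Or.inr fun x => ?_
    have h1 : min (g₀ x) (g₁ x) ≤ g₁ x := min_le_right _ _
    have h2 : max (f₀ x) (f₁ x) < min (g₀ x) (g₁ x) := by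
      simp only [max_lt_iff, lt_min_iff]
      exact ⟨⟨h₀₀ x, h₁₀ x⟩, h₀₁ x, h₁₁ x⟩
    show (max (f₀ x) (f₁ x) + min (g₀ x) (g₁ x)) / 2 < g₁ x
    linarith [h1, h2]
end

section
/- Let X and Y be compact Hausdorff totally disconnected topological spaces, and let G_X = LocallyConstant X ℚ, G_Y = LocallyConstant Y ℚ. The following are equivalent: (1) X and Y are homeomorphic; (2) there exists an additive group isomorphism e : G_X → G_Y with e((G_X)_{+,≪}) = (G_Y)_{+,≪}; (3) there exists an additive group isomorphism e : G_X → G_Y with e((G_X)_+) = (G_Y)_+. -/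
open Set

namespace Stmt4Aux

variable {X Y : Type*} [TopologicalSpace X] [TopologicalSpace Y]

noncomputable def pmin (f g : LocallyConstant X ℚ) : LocallyConstant X ℚ :=
  ⟨fun x => min (f x) (g x), f.isLocallyConstant.comp₂ g.isLocallyConstant min⟩

lemma pmin_apply (f g : LocallyConstant X ℚ) (x : X) : pmin f g x = min (f x) (g x) := rfl

noncomputable def pos (f : LocallyConstant X ℚ) : LocallyConstant X ℚ :=
  ⟨fun x => max (f x) 0, f.isLocallyConstant.comp₂ (IsLocallyConstant.const 0) max⟩

lemma pos_apply (f : LocallyConstant X ℚ) (x : X) : pos f x = max (f x) 0 := rfl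

lemma pos_nonneg (f : LocallyConstant X ℚ) (x : X) : 0 ≤ pos f x := le_max_right _ _

lemma pos_sub (f : LocallyConstant X ℚ) : f = pos f - pos (-f) := by
  ext x
  simp only [LocallyConstant.sub_apply, pos_apply, LocallyConstant.neg_apply]
  exact (max_zero_sub_max_neg_zero_eq_self (f x)).symm

open Classical in
noncomputable def chi (U : Set X) : LocallyConstant X ℚ :=
  if h : IsClopen U then LocallyConstant.charFn ℚ h else 0

lemma chi_apply_mem {U : Set X} (hU : IsClopen U) {x : X} (hx : x ∈ U) : chi U x = 1 := by
  rw [chi, dif_pos hU]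
  exact (LocallyConstant.charFn_eq_one ℚ x hU).mpr hx

lemma chi_apply_not_mem {U : Set X} {x : X} (hx : x ∉ U) : chi U x = 0 := by
  rw [chi]
  split
  · exact (LocallyConstant.charFn_eq_zero ℚ x ‹_›).mpr hx
  · rfl

lemma chi_nonneg (U : Set X) (x : X) : 0 ≤ chi U x := by
  by_cases hU : IsClopen U
  · by_cases hx : x ∈ U
    · rw [chi_apply_mem hU hx]; norm_num
    · rw [chi_apply_not_mem hx]
  · rw [chi, dif_neg hU]; rfl

lemma chi_univ : chi (univ : Set X) = 1 := by
  ext x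
  rw [chi_apply_mem isClopen_univ (mem_univ x), LocallyConstant.coe_one, Pi.one_apply]

lemma chi_compl {U : Set X} (hU : IsClopen U) : chi U + chi Uᶜ = 1 := by
  ext x
  rw [LocallyConstant.add_apply, LocallyConstant.coe_one, Pi.one_apply]
  by_cases hx : x ∈ U
  · rw [chi_apply_mem hU hx, chi_apply_not_mem (by simpa using hx)]; norm_num
  · rw [chi_apply_not_mem hx, chi_apply_mem hU.compl (by simpa using hx)]; norm_num

lemma chi_split {U V : Set X} (hU : IsClopen U) (hV : IsClopen V) :
    chi U = chi (U ∩ V) + chi (U \ V) := by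
  ext x
  rw [LocallyConstant.add_apply]
  by_cases hx : x ∈ U
  · rw [chi_apply_mem hU hx]
    by_cases hxV : x ∈ V
    · rw [chi_apply_mem (hU.inter hV) ⟨hx, hxV⟩, chi_apply_not_mem (fun h => h.2 hxV)]; norm_num
    · rw [chi_apply_not_mem (fun h => hxV h.2), chi_apply_mem (hU.diff hV) ⟨hx, hxV⟩]; norm_num
  · rw [chi_apply_not_mem hx, chi_apply_not_mem (fun h => hx h.1),
      chi_apply_not_mem (fun h => hx h.1)]; norm_num


section PointMap

variable [CompactSpace X] [T2Space X] [TotallyDisconnectedSpace X] [Nonempty X]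

theorem pointMap (e : LocallyConstant X ℚ ≃+ LocallyConstant Y ℚ)
    (h1 : ∀ f : LocallyConstant X ℚ, (∀ x, 0 ≤ f x) → ∀ y, 0 ≤ e f y)
    (h2 : ∀ g : LocallyConstant Y ℚ, (∀ y, 0 ≤ g y) → ∀ x, 0 ≤ e.symm g x) :
    ∃ φ : Y → X, Continuous φ ∧ ∀ (y : Y) (f : LocallyConstant X ℚ),
      e f y = e 1 y * f (φ y) := by
  -- monotonicity
  have hmono : ∀ f g : LocallyConstant X ℚ, (∀ x, f x ≤ g x) → ∀ y, e f y ≤ e g y := by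
    intro f g h y
    have := h1 (g - f) (fun x => by rw [LocallyConstant.sub_apply]; linarith [h x]) y
    rw [map_sub, LocallyConstant.sub_apply] at this
    linarith
  have hmono' : ∀ f g : LocallyConstant Y ℚ, (∀ y, f y ≤ g y) → ∀ x, e.symm f x ≤ e.symm g x := by
    intro f g h x
    have := h2 (g - f) (fun y => by rw [LocallyConstant.sub_apply]; linarith [h y]) x
    rw [map_sub, LocallyConstant.sub_apply] at this
    linarith
  -- disjointness
  have hdisj : ∀ f g : LocallyConstant X ℚ, (∀ x, 0 ≤ f x) → (∀ x, 0 ≤ g x) →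
      (∀ x, f x = 0 ∨ g x = 0) → ∀ y, e f y = 0 ∨ e g y = 0 := by
    intro f g hf hg hfg y
    set m := pmin (e f) (e g) with hm
    have hm0 : ∀ y', 0 ≤ m y' := fun y' => le_min (h1 f hf y') (h1 g hg y')
    have hle1 : ∀ x, e.symm m x ≤ f x := by
      intro x
      have := hmono' m (e f) (fun y' => min_le_left _ _) x
      rwa [e.symm_apply_apply] at this
    have hle2 : ∀ x, e.symm m x ≤ g x := by
      intro x
      have := hmono' m (e g) (fun y' => min_le_right _ _) x
      rwa [e.symm_apply_apply] at this
    have hsm : e.symm m = 0 := by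
      ext x
      have := h2 m hm0 x
      rcases hfg x with h | h
      · have := hle1 x; rw [LocallyConstant.zero_apply]; linarith
      · have := hle2 x; rw [LocallyConstant.zero_apply]; linarith
    have hm0' : m = 0 := by
      have := congrArg e hsm
      rwa [e.apply_symm_apply, map_zero] at this
    have := DFunLike.congr_fun hm0' y
    rw [pmin_apply, LocallyConstant.zero_apply] at this
    rcases min_choice (e f y) (e g y) with h | h <;> rw [h] at this
    · exact Or.inl this
    · exact Or.inr this
  -- boundedness
  have hbound : ∀ f : LocallyConstant X ℚ, ∃ n : ℚ, 0 ≤ n ∧ ∀ x, f x ≤ n := by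
    intro f
    obtain ⟨n, hn⟩ := f.range_finite.bddAbove
    exact ⟨max n 0, le_max_right _ _, fun x => le_trans (hn ⟨x, rfl⟩) (le_max_left _ _)⟩
  -- strict positivity of e 1
  have hepos : ∀ y, 0 < e 1 y := by
    intro y
    rcases (h1 1 (fun x => by rw [LocallyConstant.coe_one, Pi.one_apply]; norm_num) y).lt_or_eq
      with h | h
    · exact h
    · exfalso
      have key : ∀ g : LocallyConstant X ℚ, (∀ x, 0 ≤ g x) → e g y = 0 := by
        intro g hg
        obtain ⟨n, hn0, hn⟩ := hbound g
        have hb := hmono g (n • 1) (fun x => by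
          rw [LocallyConstant.smul_apply, LocallyConstant.coe_one, Pi.one_apply, smul_eq_mul,
            mul_one]
          exact hn x) y
        rw [map_rat_smul, LocallyConstant.smul_apply, smul_eq_mul, ← h, mul_zero] at hb
        have := h1 g hg y
        linarith
      have hall : ∀ f : LocallyConstant X ℚ, e f y = 0 := by
        intro f
        have hd := pos_sub f
        rw [hd, map_sub, LocallyConstant.sub_apply, key (pos f) (pos_nonneg f),
          key (pos (-f)) (pos_nonneg (-f)), sub_zero]
      have h1' := hall (e.symm (LocallyConstant.const Y 1))
      rw [e.apply_symm_apply] at h1'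
      simp only [LocallyConstant.coe_const, Function.const_apply] at h1'
      exact one_ne_zero h1'
  -- existence of the point
  have hpoint : ∀ y : Y, ∃ x : X, ∀ f : LocallyConstant X ℚ, e f y = e 1 y * f x := by
    intro y
    set ι := {U : Set X // IsClopen U ∧ e (chi U) y ≠ 0} with hι
    haveI : Nonempty ι := ⟨⟨univ, isClopen_univ, by rw [chi_univ]; exact (hepos y).ne'⟩⟩
    have hinter : ∀ i j : ι, IsClopen (i.1 ∩ j.1) ∧ e (chi (i.1 ∩ j.1)) y ≠ 0 := by
      rintro ⟨U, hU, hUe⟩ ⟨V, hV, hVe⟩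
      refine ⟨hU.inter hV, ?_⟩
      have hsplit := chi_split hU hV (X := X)
      have hdzero : e (chi (U \ V)) y = 0 := by
        rcases hdisj (chi (U \ V)) (chi V) (chi_nonneg _) (chi_nonneg _)
          (fun x => by
            by_cases hx : x ∈ V
            · exact Or.inl (chi_apply_not_mem (fun h => h.2 hx))
            · exact Or.inr (chi_apply_not_mem hx)) y with h | h
        · exact h
        · exact absurd h hVe
      have := congrArg (fun f => e f y) hsplit
      simp only [map_add, LocallyConstant.add_apply, hdzero, add_zero] at this
      rw [← this]
      exact hUe
    obtain ⟨x, hx⟩ := IsCompact.nonempty_iInter_of_directed_nonempty_isCompact_isClosed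
      (fun i : ι => i.1)
      (fun i j => ⟨⟨i.1 ∩ j.1, hinter i j⟩, inter_subset_left, inter_subset_right⟩)
      (fun i => by
        by_contra h
        rw [not_nonempty_iff_eq_empty] at h
        apply i.2.2
        have : chi i.1 = 0 := by
          ext x
          rw [chi_apply_not_mem (by rw [show (i.1 : Set X) = ∅ from h]; exact notMem_empty x), LocallyConstant.zero_apply]
        rw [this, map_zero, LocallyConstant.zero_apply])
      (fun i => i.2.1.isClosed.isCompact)
      (fun i => i.2.1.isClosed)
    have hxmem : ∀ (U : Set X), IsClopen U → e (chi U) y ≠ 0 → x ∈ U := by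
      intro U hU hne
      exact mem_iInter.mp hx ⟨U, hU, hne⟩
    refine ⟨x, fun f => ?_⟩
    set q := f x with hq
    set U := f ⁻¹' {q} with hUdef
    have hU : IsClopen U := f.isLocallyConstant.isClopen_fiber q
    have hxU : x ∈ U := by rw [hUdef]; exact rfl
    have hadd : e (chi U) y + e (chi Uᶜ) y = e 1 y := by
      rw [← LocallyConstant.add_apply, ← map_add, chi_compl hU]
    have hone : e (chi U) y ≠ 0 := by
      intro h0
      have hcne : e (chi Uᶜ) y ≠ 0 := by
        rw [h0, zero_add] at hadd
        rw [hadd]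
        exact (hepos y).ne'
      exact (hxmem Uᶜ hU.compl hcne) hxU
    have hzero : e (chi Uᶜ) y = 0 := by
      rcases hdisj (chi U) (chi Uᶜ) (chi_nonneg _) (chi_nonneg _)
        (fun x' => by
          by_cases hx' : x' ∈ U
          · exact Or.inr (chi_apply_not_mem (by simpa using hx'))
          · exact Or.inl (chi_apply_not_mem hx')) y with h | h
      · exact absurd h hone
      · exact h
    have hchiU : e (chi U) y = e 1 y := by linarith
    set g := f - q • chi U with hg
    have hgU : ∀ x' ∈ U, g x' = 0 := by
      intro x' hx'
      have hfx' : f x' = q := hx'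
      rw [hg, LocallyConstant.sub_apply, LocallyConstant.smul_apply, chi_apply_mem hU hx',
        smul_eq_mul, mul_one, hfx', sub_self]
    have hvanish : ∀ h : LocallyConstant X ℚ, (∀ x', 0 ≤ h x') → (∀ x' ∈ U, h x' = 0) →
        e h y = 0 := by
      intro h hpos hz
      obtain ⟨n, hn0, hn⟩ := hbound h
      have hb := hmono h (n • chi Uᶜ) (fun x' => by
        rw [LocallyConstant.smul_apply, smul_eq_mul]
        by_cases hx' : x' ∈ U
        · rw [chi_apply_not_mem (by simpa using hx'), mul_zero, hz x' hx']
        · rw [chi_apply_mem hU.compl (by simpa using hx'), mul_one]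
          exact hn x') y
      rw [map_rat_smul, LocallyConstant.smul_apply, smul_eq_mul, hzero, mul_zero] at hb
      have := h1 h hpos y
      linarith
    have hgy : e g y = 0 := by
      rw [pos_sub g, map_sub, LocallyConstant.sub_apply,
        hvanish (pos g) (pos_nonneg g) (fun x' hx' => by
          rw [pos_apply, hgU x' hx', max_self]),
        hvanish (pos (-g)) (pos_nonneg (-g)) (fun x' hx' => by
          rw [pos_apply, LocallyConstant.neg_apply, hgU x' hx', neg_zero, max_self]),
        sub_zero]
    have hfsplit : q • chi U + g = f := by rw [hg]; abel
    calc e f y = e (q • chi U) y + e g y := by rw [← LocallyConstant.add_apply, ← map_add, hfsplit]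
    _ = q * e 1 y := by rw [hgy, add_zero, map_rat_smul, LocallyConstant.smul_apply, smul_eq_mul,
        hchiU]
    _ = e 1 y * f x := by rw [hq]; ring
  choose φ hφ using hpoint
  refine ⟨φ, ?_, hφ⟩
  rw [isTopologicalBasis_isClopen.continuous_iff]
  intro U hU
  have hset : φ ⁻¹' U = {y | (e (chi U) - e 1) y = 0} := by
    ext y
    simp only [mem_preimage, mem_setOf_eq, LocallyConstant.sub_apply]
    constructor
    · intro hyU
      rw [hφ y (chi U), chi_apply_mem hU hyU, mul_one, sub_self]
    · intro h0
      by_contra hyU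
      rw [hφ y (chi U), chi_apply_not_mem hyU, mul_zero, zero_sub, neg_eq_zero] at h0
      exact (hepos y).ne' h0
  rw [hset]
  exact (e (chi U) - e 1).isLocallyConstant.isOpen_fiber 0

end PointMap

section Glue

variable [CompactSpace X] [T2Space X] [TotallyDisconnectedSpace X]
variable [CompactSpace Y] [T2Space Y] [TotallyDisconnectedSpace Y]

theorem mainNonempty [Nonempty X] [Nonempty Y]
    (e : LocallyConstant X ℚ ≃+ LocallyConstant Y ℚ)
    (h1 : ∀ f : LocallyConstant X ℚ, (∀ x, 0 ≤ f x) → ∀ y, 0 ≤ e f y)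
    (h2 : ∀ g : LocallyConstant Y ℚ, (∀ y, 0 ≤ g y) → ∀ x, 0 ≤ e.symm g x) :
    Nonempty (X ≃ₜ Y) := by
  obtain ⟨φ, hφc, hφ⟩ := pointMap e h1 h2
  obtain ⟨ψ, hψc, hψ⟩ := pointMap e.symm h2 (fun f hf => by
    rw [AddEquiv.symm_symm]; exact h1 f hf)
  haveI : TotallySeparatedSpace X := loc_compact_t2_tot_disc_iff_tot_sep.mp inferInstance
  haveI : TotallySeparatedSpace Y := loc_compact_t2_tot_disc_iff_tot_sep.mp inferInstance
  have keyX : ∀ x, φ (ψ x) = x := by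
    intro x
    have hc : ∀ f : LocallyConstant X ℚ,
        f x = (e.symm 1 x * e 1 (ψ x)) * f (φ (ψ x)) := by
      intro f
      have a := hψ x (e f)
      rw [e.symm_apply_apply] at a
      rw [a, hφ (ψ x) f]
      ring
    have hone : e.symm 1 x * e 1 (ψ x) = 1 := by
      have := hc 1
      rw [LocallyConstant.coe_one, Pi.one_apply, Pi.one_apply, mul_one] at this
      exact this.symm
    have hval : ∀ f : LocallyConstant X ℚ, f x = f (φ (ψ x)) := by
      intro f
      rw [hc f, hone, one_mul]
    by_contra hne
    obtain ⟨U, hU, hx1, hx2⟩ := exists_isClopen_of_totally_separated (Ne.symm hne)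
    have := hval (chi U)
    rw [chi_apply_mem hU hx1, chi_apply_not_mem hx2] at this
    exact one_ne_zero this
  have keyY : ∀ y, ψ (φ y) = y := by
    intro y
    have hc : ∀ g : LocallyConstant Y ℚ,
        g y = (e 1 y * e.symm 1 (φ y)) * g (ψ (φ y)) := by
      intro g
      have a := hφ y (e.symm g)
      rw [e.apply_symm_apply] at a
      rw [a, hψ (φ y) g]
      ring
    have hone : e 1 y * e.symm 1 (φ y) = 1 := by
      have := hc 1
      rw [LocallyConstant.coe_one, Pi.one_apply, Pi.one_apply, mul_one] at this
      exact this.symm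
    have hval : ∀ g : LocallyConstant Y ℚ, g y = g (ψ (φ y)) := by
      intro g
      rw [hc g, hone, one_mul]
    by_contra hne
    obtain ⟨U, hU, hx1, hx2⟩ := exists_isClopen_of_totally_separated (Ne.symm hne)
    have := hval (chi U)
    rw [chi_apply_mem hU hx1, chi_apply_not_mem hx2] at this
    exact one_ne_zero this
  exact ⟨⟨⟨ψ, φ, keyX, keyY⟩, hψc, hφc⟩⟩

theorem ofCone (e : LocallyConstant X ℚ ≃+ LocallyConstant Y ℚ)
    (he : ⇑e '' {g | ∀ x, 0 ≤ g x} = {g | ∀ y, 0 ≤ g y}) :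
    Nonempty (X ≃ₜ Y) := by
  have h1 : ∀ f : LocallyConstant X ℚ, (∀ x, 0 ≤ f x) → ∀ y, 0 ≤ e f y := by
    intro f hf
    have : e f ∈ {g : LocallyConstant Y ℚ | ∀ y, 0 ≤ g y} := he ▸ mem_image_of_mem ⇑e hf
    exact this
  have h2 : ∀ g : LocallyConstant Y ℚ, (∀ y, 0 ≤ g y) → ∀ x, 0 ≤ e.symm g x := by
    intro g hg
    have hg' : g ∈ ⇑e '' {g : LocallyConstant X ℚ | ∀ x, 0 ≤ g x} := by rw [he]; exact hg
    obtain ⟨f, hf, hef⟩ := hg'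
    rw [← hef, e.symm_apply_apply]
    exact hf
  cases isEmpty_or_nonempty X with
  | inl hX =>
    haveI : Subsingleton (LocallyConstant X ℚ) :=
      ⟨fun a b => LocallyConstant.ext fun x => isEmptyElim x⟩
    haveI hY : IsEmpty Y := by
      by_contra h
      rw [not_isEmpty_iff] at h
      obtain ⟨y⟩ := h
      have h10 : (1 : LocallyConstant Y ℚ) = 0 := by
        calc (1 : LocallyConstant Y ℚ) = e (e.symm 1) := (e.apply_symm_apply 1).symm
        _ = e (e.symm 0) := by rw [Subsingleton.elim (e.symm 1) (e.symm 0)]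
        _ = 0 := by rw [e.apply_symm_apply]
      have := DFunLike.congr_fun h10 y
      rw [LocallyConstant.coe_one, Pi.one_apply, LocallyConstant.zero_apply] at this
      exact one_ne_zero this
    exact ⟨{ toEquiv := Equiv.equivOfIsEmpty X Y
             continuous_toFun := ⟨fun s _ => by
               rw [Set.eq_empty_of_isEmpty ((Equiv.equivOfIsEmpty X Y).toFun ⁻¹' s)]
               exact isOpen_empty⟩
             continuous_invFun := ⟨fun s _ => by
               rw [Set.eq_empty_of_isEmpty ((Equiv.equivOfIsEmpty X Y).invFun ⁻¹' s)]
               exact isOpen_empty⟩ }⟩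
  | inr hX =>
    haveI hY : Nonempty Y := by
      by_contra h
      haveI : IsEmpty Y := not_nonempty_iff.mp h
      haveI : Subsingleton (LocallyConstant Y ℚ) :=
        ⟨fun a b => LocallyConstant.ext fun y => isEmptyElim y⟩
      obtain ⟨x⟩ := hX
      have h10 : (1 : LocallyConstant X ℚ) = 0 := e.injective (Subsingleton.elim _ _)
      have := DFunLike.congr_fun h10 x
      rw [LocallyConstant.coe_one, Pi.one_apply, LocallyConstant.zero_apply] at this
      exact one_ne_zero this
    exact mainNonempty e h1 h2

end Glue

section Strict

theorem coneChar (f : LocallyConstant X ℚ) :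
    (∀ x, 0 ≤ f x) ↔ ∀ h : LocallyConstant X ℚ,
      (h = 0 ∨ ∀ x, 0 < h x) → h ≠ 0 → ((f + h) = 0 ∨ ∀ x, 0 < (f + h) x) := by
  constructor
  · intro hf h hh hne
    rcases hh with rfl | hpos
    · exact absurd rfl hne
    · right
      intro x
      rw [LocallyConstant.add_apply]
      have := hf x
      have := hpos x
      linarith
  · intro H x
    by_contra hx
    push_neg at hx
    set c : ℚ := -f x / 2 with hc
    have hc0 : 0 < c := by rw [hc]; linarith
    set h : LocallyConstant X ℚ := LocallyConstant.const X c with hh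
    have hhpos : h = 0 ∨ ∀ x', 0 < h x' := Or.inr fun x' => hc0
    have hne : h ≠ 0 := by
      intro h0
      have := DFunLike.congr_fun h0 x
      rw [LocallyConstant.coe_const, Function.const_apply, LocallyConstant.zero_apply] at this
      linarith
    rcases H h hhpos hne with h0 | hpos
    · have := DFunLike.congr_fun h0 x
      rw [LocallyConstant.add_apply, LocallyConstant.zero_apply] at this
      have hcx : h x = c := rfl
      rw [hcx] at this
      rw [hc] at this
      linarith
    · have := hpos x
      rw [LocallyConstant.add_apply] at this
      have hcx : h x = c := rfl
      rw [hcx, hc] at this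
      linarith

theorem strict_to_cone (e : LocallyConstant X ℚ ≃+ LocallyConstant Y ℚ)
    (he : ⇑e '' {g | g = 0 ∨ ∀ x, 0 < g x} = {g | g = 0 ∨ ∀ y, 0 < g y}) :
    ⇑e '' {g | ∀ x, 0 ≤ g x} = {g | ∀ y, 0 ≤ g y} := by
  have h1 : ∀ f : LocallyConstant X ℚ, (f = 0 ∨ ∀ x, 0 < f x) →
      (e f = 0 ∨ ∀ y, 0 < e f y) := by
    intro f hf
    have : e f ∈ {g : LocallyConstant Y ℚ | g = 0 ∨ ∀ y, 0 < g y} :=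
      he ▸ mem_image_of_mem ⇑e hf
    exact this
  have h2 : ∀ g : LocallyConstant Y ℚ, (g = 0 ∨ ∀ y, 0 < g y) →
      (e.symm g = 0 ∨ ∀ x, 0 < e.symm g x) := by
    intro g hg
    have hg' : g ∈ ⇑e '' {g : LocallyConstant X ℚ | g = 0 ∨ ∀ x, 0 < g x} := by
      rw [he]; exact hg
    obtain ⟨f, hf, hef⟩ := hg'
    rw [← hef, e.symm_apply_apply]
    exact hf
  ext g
  simp only [mem_image, mem_setOf_eq]
  constructor
  · rintro ⟨f, hf, rfl⟩
    rw [coneChar]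
    intro h hh hne
    have hsymm := h2 h hh
    have hne' : e.symm h ≠ 0 := by
      intro h0
      apply hne
      have := congrArg e h0
      rwa [e.apply_symm_apply, map_zero] at this
    have hmem := (coneChar f).mp hf (e.symm h) hsymm hne'
    have := h1 _ hmem
    rwa [map_add, e.apply_symm_apply] at this
  · intro hg
    refine ⟨e.symm g, ?_, e.apply_symm_apply g⟩
    rw [coneChar]
    intro h hh hne
    have hsymm := h1 h hh
    have hne' : e h ≠ 0 := by
      intro h0
      exact hne (e.injective (by rw [h0, map_zero]))
    have hmem := (coneChar g).mp hg (e h) hsymm hne'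
    have := h2 _ hmem
    rwa [map_add, e.symm_apply_apply] at this

end Strict

section Forward

noncomputable def homeoEquiv (h : X ≃ₜ Y) :
    LocallyConstant X ℚ ≃+ LocallyConstant Y ℚ :=
  { LocallyConstant.congrLeft h with
    map_add' := fun f g => rfl }

lemma homeoEquiv_apply (h : X ≃ₜ Y) (f : LocallyConstant X ℚ) (y : Y) :
    homeoEquiv h f y = f (h.symm y) := rfl

lemma homeoEquiv_symm_apply (h : X ≃ₜ Y) (g : LocallyConstant Y ℚ) (x : X) :
    (homeoEquiv h).symm g x = g (h x) := rfl

theorem homeo_strict (h : X ≃ₜ Y) :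
    ⇑(homeoEquiv h) '' {g : LocallyConstant X ℚ | g = 0 ∨ ∀ x, 0 < g x} =
      {g : LocallyConstant Y ℚ | g = 0 ∨ ∀ y, 0 < g y} := by
  ext g
  simp only [mem_image, mem_setOf_eq]
  constructor
  · rintro ⟨f, hf, rfl⟩
    rcases hf with rfl | hf
    · exact Or.inl (map_zero _)
    · exact Or.inr fun y => hf (h.symm y)
  · intro hg
    refine ⟨(homeoEquiv h).symm g, ?_, (homeoEquiv h).apply_symm_apply g⟩
    rcases hg with rfl | hg
    · exact Or.inl (map_zero _)
    · exact Or.inr fun x => hg (h x)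

theorem homeo_cone (h : X ≃ₜ Y) :
    ⇑(homeoEquiv h) '' {g : LocallyConstant X ℚ | ∀ x, 0 ≤ g x} =
      {g : LocallyConstant Y ℚ | ∀ y, 0 ≤ g y} := by
  ext g
  simp only [mem_image, mem_setOf_eq]
  constructor
  · rintro ⟨f, hf, rfl⟩
    exact fun y => hf (h.symm y)
  · intro hg
    exact ⟨(homeoEquiv h).symm g, fun x => hg (h x), (homeoEquiv h).apply_symm_apply g⟩

end Forward

end Stmt4Aux

open Stmt4Aux in
/-- For compact Hausdorff totally disconnected `X`, `Y`, the following are equivalent: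
(1) `X ≃ₜ Y`; (2) group isomorphism `G_X ≃+ G_Y` matching the strict cones;
(3) group isomorphism matching the pointwise cones. -/
theorem stmt4 (X Y : Type*)
    [TopologicalSpace X] [CompactSpace X] [T2Space X] [TotallyDisconnectedSpace X]
    [TopologicalSpace Y] [CompactSpace Y] [T2Space Y] [TotallyDisconnectedSpace Y] :
    (Nonempty (X ≃ₜ Y) ↔
      ∃ e : LocallyConstant X ℚ ≃+ LocallyConstant Y ℚ,
        ⇑e '' {g | g = 0 ∨ ∀ x, 0 < g x} = {g | g = 0 ∨ ∀ y, 0 < g y}) ∧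
    (Nonempty (X ≃ₜ Y) ↔
      ∃ e : LocallyConstant X ℚ ≃+ LocallyConstant Y ℚ,
        ⇑e '' {g | ∀ x, 0 ≤ g x} = {g | ∀ y, 0 ≤ g y}) := by
  constructor
  · constructor
    · rintro ⟨h⟩
      exact ⟨homeoEquiv h, homeo_strict h⟩
    · rintro ⟨e, he⟩
      exact ofCone e (strict_to_cone e he)
  · constructor
    · rintro ⟨h⟩
      exact ⟨homeoEquiv h, homeo_cone h⟩
    · rintro ⟨e, he⟩
      exact ofCone e he
end

section
/- Let X and Y be topological spaces and let Φ : LocallyConstant X ℚ → LocallyConstant Y ℚ be an injective additive group homomorphism such that Φ maps the strict cone (G_X)_{+,≪} into the strict cone (G_Y)_{+,≪}. Then Φ maps the pointwise cone into the pointwise cone: for every g with g(x) ≥ 0 for all x ∈ X, one has (Φ g)(y) ≥ 0 for all y ∈ Y. -/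
/-- An injective additive homomorphism `Φ : LocallyConstant X ℚ →+ LocallyConstant Y ℚ`
mapping the strict cone into the strict cone also maps the pointwise cone into the
pointwise cone. -/
theorem stmt5 (X Y : Type*) [TopologicalSpace X] [TopologicalSpace Y]
    (Φ : LocallyConstant X ℚ →+ LocallyConstant Y ℚ)
    (hinj : Function.Injective Φ)
    (hstrict : ∀ g : LocallyConstant X ℚ,
      (g = 0 ∨ ∀ x, 0 < g x) → (Φ g = 0 ∨ ∀ y, 0 < Φ g y)) :
    ∀ g : LocallyConstant X ℚ, (∀ x, 0 ≤ g x) → ∀ y, 0 ≤ Φ g y := by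
  intro g hg y
  by_contra hneg
  push_neg at hneg
  have key : ∀ n : ℕ, 0 ≤ (n : ℚ) * Φ g y + Φ 1 y := by
    intro n
    have hpos : ∀ x, 0 < ((n : ℕ) • g + 1) x := by
      intro x
      simp only [LocallyConstant.add_apply, LocallyConstant.coe_smul, Pi.smul_apply,
        LocallyConstant.coe_one, Pi.one_apply]
      have := hg x
      positivity
    have := hstrict _ (Or.inr hpos)
    have heq : Φ ((n : ℕ) • g + 1) y = (n : ℚ) * Φ g y + Φ 1 y := by
      rw [map_add, map_nsmul]
      simp only [LocallyConstant.add_apply]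
      congr 1
    rcases this with h | h
    · rw [h] at heq
      simp only [LocallyConstant.zero_apply] at heq
      linarith [heq]
    · have := h y
      rw [heq] at this
      linarith
  obtain ⟨n, hn⟩ := exists_nat_gt (Φ 1 y / (-Φ g y))
  have h1 : (n : ℚ) * (-Φ g y) > Φ 1 y := by
    rwa [gt_iff_lt, ← div_lt_iff₀ (by linarith)]
  have := key n
  linarith
end

section
/- Let X be a compact topological space and let f, g ∈ LocallyConstant X ℚ with f(x) ≥ 0 and g(x) ≥ 0 for all x ∈ X. Then there exists n ∈ ℕ with f(x) ≤ n · g(x) for all x ∈ X if and only if {x ∈ X : g(x) = 0} ⊆ {x ∈ X : f(x) = 0}. -/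
/-- For compact `X` and nonnegative `f, g ∈ LocallyConstant X ℚ`:
`∃ n, f ≤ n·g` pointwise iff the zero set of `g` is contained in the zero set of `f`. -/
theorem stmt6 (X : Type*) [TopologicalSpace X] [CompactSpace X]
    (f g : LocallyConstant X ℚ) (hf : ∀ x, 0 ≤ f x) (hg : ∀ x, 0 ≤ g x) :
    (∃ n : ℕ, ∀ x, f x ≤ (n : ℚ) * g x) ↔ {x | g x = 0} ⊆ {x | f x = 0} := by
  constructor
  · rintro ⟨n, hn⟩ x hx
    simp only [Set.mem_setOf_eq] at hx ⊢
    have := hn x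
    rw [hx, mul_zero] at this
    exact le_antisymm this (hf x)
  · intro hsub
    set h : LocallyConstant X ℚ := f / g with hh
    obtain ⟨q, hq⟩ := h.range_finite.bddAbove
    refine ⟨⌈q⌉₊, fun x => ?_⟩
    by_cases hgx : g x = 0
    · have : f x = 0 := hsub hgx
      simp [this, hgx]
    · have hgpos : 0 < g x := lt_of_le_of_ne (hg x) (Ne.symm hgx)
      have h1 : f x / g x ≤ q := hq ⟨x, rfl⟩
      have h2 : q ≤ (⌈q⌉₊ : ℚ) := Nat.le_ceil q
      have : f x / g x ≤ (⌈q⌉₊ : ℚ) := h1.trans h2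
      calc f x = (f x / g x) * g x := by field_simp
        _ ≤ (⌈q⌉₊ : ℚ) * g x := mul_le_mul_of_nonneg_right this (hg x)
end

section
/- Let α < β be countable ordinals satisfying ω^α = α and ω^β = β (ordinal exponentiation, ω the first infinite ordinal). Then the topological spaces Iic α = {x : x ≤ α} and Iic β = {x : x ≤ β}, viewed as subspaces of the ordinals with the order topology, are not homeomorphic. -/
open Ordinal Set Filter Topology

section AccPtSubtype

variable {X : Type*} [TopologicalSpace X]

/-- Accumulation points in a subtype correspond to accumulation points of the image. -/
lemma accPt_subtype_val_iff {s : Set X} {A : Set s} {x : s} :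
    AccPt x (𝓟 A) ↔ AccPt (x : X) (𝓟 (Subtype.val '' A)) := by
  have hinj : Function.Injective ((↑) : s → X) := Subtype.val_injective
  have hpre : ((↑) : s → X) ⁻¹' {(x : X)}ᶜ = {x}ᶜ := by
    ext y; simp [Subtype.ext_iff]
  have key : 𝓝[≠] x ⊓ 𝓟 A =
      Filter.comap (↑) (𝓝[≠] (x : X) ⊓ 𝓟 (Subtype.val '' A)) := by
    rw [nhdsWithin, nhdsWithin, Filter.comap_inf, Filter.comap_inf, nhds_subtype,
      Filter.comap_principal, Filter.comap_principal, Set.preimage_image_eq _ hinj, hpre]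
  unfold AccPt
  rw [key]
  constructor
  · exact fun h => Filter.neBot_of_comap h
  · intro h
    refine Filter.NeBot.comap_of_range_mem h ?_
    exact Filter.mem_of_superset (Filter.mem_inf_of_right (Filter.mem_principal_self _))
      (Set.image_subset_range _ _)

/-- The transfinite Cantor–Bendixson iteration of the derived set, starting from `univ`. -/
def CBd (X : Type*) [TopologicalSpace X] (o : Ordinal) : Set X :=
  ⋂ o' : {p : Ordinal // p < o}, derivedSet (CBd X o'.1)
termination_by o
decreasing_by exact o'.2

lemma mem_CBd {o : Ordinal} {x : X} :
    x ∈ CBd X o ↔ ∀ p < o, x ∈ derivedSet (CBd X p) := by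
  rw [CBd]
  constructor
  · intro h p hp; exact Set.mem_iInter.mp h ⟨p, hp⟩
  · intro h; exact Set.mem_iInter.mpr fun p => h p.1 p.2

lemma CBd_zero : CBd X 0 = Set.univ := by
  have : IsEmpty {p : Ordinal // p < 0} := ⟨fun p => not_lt_zero p.2⟩
  rw [CBd]
  exact Set.iInter_of_empty _

lemma image_CBd_subset {Y : Type*} [TopologicalSpace Y] (h : X ≃ₜ Y) (o : Ordinal) :
    h '' CBd X o ⊆ CBd Y o := by
  induction o using Ordinal.induction with
  | h o IH =>
    rintro _ ⟨x, hx, rfl⟩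
    rw [mem_CBd]
    intro p hp
    have hx' : AccPt x (𝓟 (CBd X p)) := mem_CBd.mp hx p hp
    have h1 : AccPt (h x) (𝓟 (h '' CBd X p)) := by
      have := hx'.map h.continuous.continuousAt h.injective
      rwa [Filter.map_principal] at this
    exact derivedSet_mono _ _ (IH p hp) h1

lemma image_CBd {Y : Type*} [TopologicalSpace Y] (h : X ≃ₜ Y) (o : Ordinal) :
    h '' CBd X o = CBd Y o := by
  refine subset_antisymm (image_CBd_subset h o) fun y hy => ?_
  have := image_CBd_subset h.symm o ⟨y, hy, rfl⟩
  exact ⟨h.symm y, this, by simp⟩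

end AccPtSubtype

/-- multiples of `ω^o` that are nonzero and at most `γ`. -/
def Mset (o γ : Ordinal) : Set Ordinal := {x | ω ^ o ∣ x ∧ x ≠ 0 ∧ x ≤ γ}

lemma accPt_Mset_iff {o γ x : Ordinal} :
    AccPt x (𝓟 (Mset o γ)) ↔ (ω ^ (o + 1) ∣ x ∧ x ≠ 0 ∧ x ≤ γ) := by
  have hω : (ω : Ordinal) ^ o ≠ 0 := opow_ne_zero o omega0_ne_zero
  have hωpos : (0 : Ordinal) < ω ^ o := pos_iff_ne_zero.mpr hω
  rw [show AccPt x (𝓟 (Mset o γ)) ↔ Ordinal.IsAcc x (Mset o γ) from Iff.rfl,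
    Ordinal.isAcc_iff]
  constructor
  · rintro ⟨hx0, hacc⟩
    have hxγ : x ≤ γ := by
      by_contra hc
      push_neg at hc
      obtain ⟨s, hsM, hs⟩ := hacc γ hc
      exact absurd hsM.2.2 (not_le.mpr hs.1)
    have hdvd : ω ^ o ∣ x := by
      rw [Ordinal.dvd_iff_mod_eq_zero]
      by_contra hr
      have hlt : ω ^ o * (x / ω ^ o) < x := by
        conv_rhs => rw [← Ordinal.div_add_mod x (ω ^ o)]
        exact (lt_add_iff_pos_right _).mpr (pos_iff_ne_zero.mpr hr)
      obtain ⟨s, hsM, hps, hsx⟩ := hacc _ hlt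
      obtain ⟨d, rfl⟩ := hsM.1
      have hd : x / ω ^ o < d := (mul_lt_mul_iff_right₀ hωpos).mp hps
      have hge : x < ω ^ o * d := by
        calc x = ω ^ o * (x / ω ^ o) + x % ω ^ o := (Ordinal.div_add_mod _ _).symm
          _ < ω ^ o * (x / ω ^ o) + ω ^ o := (add_lt_add_iff_left _).mpr (Ordinal.mod_lt x hω)
          _ = ω ^ o * (x / ω ^ o + 1) := by rw [mul_add, mul_one]
          _ ≤ ω ^ o * d := by
              apply mul_le_mul_right
              rw [Ordinal.add_one_eq_succ]
              exact Order.succ_le_of_lt hd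
      exact absurd hsx hge.asymm
    obtain ⟨q, rfl⟩ := hdvd
    have hq0 : q ≠ 0 := by rintro rfl; simp at hx0
    have hqlim : Order.IsSuccLimit q := by
      rcases Ordinal.zero_or_succ_or_isSuccLimit q with h | ⟨p, rfl⟩ | h
      · exact absurd h hq0
      · exfalso
        have hlt : ω ^ o * p < ω ^ o * Order.succ p :=
          (mul_lt_mul_iff_right₀ hωpos).mpr (Order.lt_succ p)
        obtain ⟨s, hsM, hps, hsx⟩ := hacc _ hlt
        obtain ⟨d, rfl⟩ := hsM.1
        have h1 : p < d := (mul_lt_mul_iff_right₀ hωpos).mp hps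
        have h2 : d < Order.succ p := (mul_lt_mul_iff_right₀ hωpos).mp hsx
        exact absurd h2 (not_lt.mpr (Order.succ_le_of_lt h1))
      · exact h
    obtain ⟨-, c, rfl⟩ := Ordinal.isSuccLimit_iff_omega0_dvd.mp hqlim
    exact ⟨⟨c, by rw [opow_add, opow_one, mul_assoc]⟩, hx0, hxγ⟩
  · rintro ⟨⟨c, rfl⟩, hx0, hxγ⟩
    have hc0 : c ≠ 0 := by rintro rfl; simp at hx0
    have hx : ω ^ (o + 1) * c = ω ^ o * (ω * c) := by rw [opow_add, opow_one, mul_assoc]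
    have hlimωc : Order.IsSuccLimit (ω * c) :=
      isSuccLimit_mul_left isSuccLimit_omega0 (pos_iff_ne_zero.mpr hc0)
    refine ⟨hx0, fun p hp => ?_⟩
    refine ⟨ω ^ o * Order.succ (p / ω ^ o), ⟨⟨_, rfl⟩, ?_, ?_⟩, ?_, ?_⟩
    · exact _root_.mul_ne_zero hω (Ordinal.succ_ne_zero _)
    · -- ≤ γ, proven from < x ≤ γ
      refine le_trans (le_of_lt ?_) hxγ
      rw [hx]
      refine (mul_lt_mul_iff_right₀ hωpos).mpr (hlimωc.succ_lt ?_)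
      rw [Ordinal.div_lt hω, ← hx]
      exact hp
    · exact Ordinal.lt_mul_succ_div p hω
    · rw [hx]
      refine (mul_lt_mul_iff_right₀ hωpos).mpr (hlimωc.succ_lt ?_)
      rw [Ordinal.div_lt hω, ← hx]
      exact hp

lemma not_accPt_zero {x : Ordinal} : ¬ AccPt x (𝓟 ({0} : Set Ordinal)) := by
  intro h
  obtain ⟨h0, hacc⟩ := (Ordinal.isAcc_iff _ _).mp h
  obtain ⟨s, hs⟩ := hacc 0 (pos_iff_ne_zero.mpr h0)
  have h1 : s = 0 := hs.1
  have h2 : 0 < s := hs.2.1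
  simp [h1] at h2

/-- The candidate Cantor–Bendixson sets inside `Iic γ`. -/
def Tset (γ o : Ordinal) : Set (Set.Iic γ) := {x | ω ^ o ∣ x.1 ∧ x.1 ≠ 0}

lemma image_Tset {γ o : Ordinal} : Subtype.val '' (Tset γ o) = Mset o γ := by
  ext x
  constructor
  · rintro ⟨⟨y, hy⟩, ⟨h1, h2⟩, rfl⟩; exact ⟨h1, h2, hy⟩
  · rintro ⟨h1, h2, h3⟩; exact ⟨⟨x, h3⟩, ⟨h1, h2⟩, rfl⟩

lemma derivedSet_Tset {γ o : Ordinal} : derivedSet (Tset γ o) = Tset γ (o + 1) := by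
  ext x
  rw [mem_derivedSet, accPt_subtype_val_iff, image_Tset]
  rw [accPt_Mset_iff]
  exact ⟨fun ⟨a, b, _⟩ => ⟨a, b⟩, fun ⟨a, b⟩ => ⟨a, b, x.2⟩⟩

lemma derivedSet_univ_Iic {γ : Ordinal} :
    derivedSet (Set.univ : Set (Set.Iic γ)) = Tset γ 1 := by
  ext x
  rw [mem_derivedSet, accPt_subtype_val_iff, Set.image_univ, Subtype.range_val]
  have h1 : (Set.Iic γ) = Mset 0 γ ∪ {0} := by
    ext y
    simp only [Set.mem_Iic, Set.mem_union, Set.mem_singleton_iff, Mset, Set.mem_setOf_eq]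
    constructor
    · intro h
      by_cases h0 : y = 0
      · exact Or.inr h0
      · exact Or.inl ⟨by rw [opow_zero]; exact one_dvd y, h0, h⟩
    · rintro (⟨-, -, h⟩ | rfl)
      · exact h
      · exact zero_le
  have h2 : (𝓟 (Iic γ) : Filter Ordinal) = 𝓟 (Mset 0 γ) ⊔ 𝓟 {0} := by
    rw [h1]; exact sup_principal.symm
  rw [h2, accPt_sup]
  constructor
  · rintro (h | h)
    · obtain ⟨a, b, -⟩ := accPt_Mset_iff.mp h
      rw [zero_add] at a
      exact ⟨a, b⟩
    · exact absurd h not_accPt_zero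
  · rintro ⟨a, b⟩
    left
    rw [accPt_Mset_iff, zero_add]
    exact ⟨a, b, x.2⟩

lemma CBd_Iic (γ o : Ordinal) (ho : 1 ≤ o) : CBd (Set.Iic γ) o = Tset γ o := by
  induction o using Ordinal.induction with
  | h o IH =>
    have hds : ∀ p < o, derivedSet (CBd (Set.Iic γ) p) = Tset γ (p + 1) := by
      intro p hp
      rcases eq_or_ne p 0 with rfl | hp0
      · rw [CBd_zero, derivedSet_univ_Iic, zero_add]
      · rw [IH p hp (Ordinal.one_le_iff_ne_zero.mpr hp0), derivedSet_Tset]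
    ext x
    rw [mem_CBd]
    constructor
    · intro h
      have h0lt : (0 : Ordinal) < o := lt_of_lt_of_le zero_lt_one ho
      have hne : x.1 ≠ 0 := by
        have h0 := h 0 h0lt
        rw [hds 0 h0lt] at h0
        exact h0.2
      refine ⟨?_, hne⟩
      rcases Ordinal.zero_or_succ_or_isSuccLimit o with rfl | ⟨p, rfl⟩ | hlim
      · exact absurd h0lt (lt_irrefl 0)
      · have hp := h p (Order.lt_succ p)
        rw [hds p (Order.lt_succ p)] at hp
        rw [← Ordinal.add_one_eq_succ]
        exact hp.1
      · rw [Ordinal.dvd_iff_mod_eq_zero]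
        by_contra hr
        have hrlt : x.1 % ω ^ o < ω ^ o := Ordinal.mod_lt _ (opow_ne_zero o omega0_ne_zero)
        have hex : ∃ p < o, x.1 % ω ^ o < ω ^ p := by
          by_contra hc
          push_neg at hc
          exact absurd ((opow_le_of_isSuccLimit omega0_ne_zero hlim).mpr hc) (not_le.mpr hrlt)
        obtain ⟨p, hpo, hrp⟩ := hex
        have hp := h p hpo
        rw [hds p hpo] at hp
        have h1 : ω ^ p ∣ x.1 :=
          dvd_trans (opow_dvd_opow ω le_self_add) hp.1
        have h2 : ω ^ p ∣ x.1 % ω ^ o := by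
          obtain ⟨m, hm⟩ := h1
          obtain ⟨n, hn⟩ : ω ^ p ∣ ω ^ o * (x.1 / ω ^ o) :=
            Dvd.dvd.mul_right (opow_dvd_opow ω hpo.le) _
          exact ⟨m - n, by rw [Ordinal.mul_sub, ← hm, ← hn, Ordinal.mod_def]⟩
        exact absurd (Ordinal.le_of_dvd hr h2) (not_le.mpr hrp)
    · rintro ⟨hdvd, hne⟩ p hp
      rw [hds p hp]
      refine ⟨dvd_trans (opow_dvd_opow ω ?_) hdvd, hne⟩
      rw [Ordinal.add_one_eq_succ]
      exact Order.succ_le_of_lt hp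

open Ordinal in
/-- For countable ordinals `α < β` with `ω^α = α` and `ω^β = β`, the spaces
`Iic α` and `Iic β` (with the subspace topology from the order topology on
the ordinals) are not homeomorphic. -/
theorem stmt7 (α β : Ordinal) (hαc : α.card ≤ Cardinal.aleph0)
    (hβc : β.card ≤ Cardinal.aleph0)
    (hα : omega0 ^ α = α) (hβ : omega0 ^ β = β) (hlt : α < β) :
    IsEmpty (Set.Iic α ≃ₜ Set.Iic β) := by
  constructor
  intro h
  have hα0 : α ≠ 0 := by
    intro e
    rw [e, opow_zero] at hα
    exact one_ne_zero hα
  have hα1 : (1 : Ordinal) ≤ α := Ordinal.one_le_iff_ne_zero.mpr hα0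
  have hβ0 : β ≠ 0 := (hlt.trans_le' zero_le).ne'
  have himg := image_CBd h α
  rw [CBd_Iic α α hα1, CBd_Iic β α hα1] at himg
  -- Tset α α is a subsingleton
  have hsub : ∀ y ∈ Tset α α, y = (⟨α, le_refl α⟩ : Set.Iic α) := by
    rintro ⟨y, hy⟩ ⟨hd, hne⟩
    rw [hα] at hd
    exact Subtype.ext (le_antisymm hy (Ordinal.le_of_dvd hne hd))
  have hamem : (⟨α, le_of_lt hlt⟩ : Set.Iic β) ∈ Tset β α := by
    refine ⟨?_, hα0⟩
    rw [hα]
  have hbmem : (⟨β, le_refl β⟩ : Set.Iic β) ∈ Tset β α := by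
    refine ⟨?_, hβ0⟩
    rw [hα]
    refine ⟨ω ^ (β - α), ?_⟩
    conv_lhs => rw [← hβ, ← Ordinal.add_sub_cancel_of_le hlt.le, opow_add, hα]
  rw [← himg] at hamem hbmem
  obtain ⟨ya, hya, hea⟩ := hamem
  obtain ⟨yb, hyb, heb⟩ := hbmem
  have hy : ya = yb := by rw [hsub ya hya, hsub yb hyb]
  rw [hy, heb] at hea
  have : β = α := congrArg Subtype.val hea
  exact absurd this hlt.ne'
end

section
/- Fix an integer k ≥ 1 and define a : ℕ → ℕ by a(0) = k + 2 and a(n+1) = 2(a(n)+1) − k + 1. Then for every n ∈ ℕ, the integer a(n)! · (a(n+1)² + (k−2)·a(n+1) − k + 1) divides a(n+1)! ; equivalently, b_n := a(n+1)! / (a(n)! · (a(n+1)² + (k−2)·a(n+1) − k + 1)) is a positive integer. (Note a(n+1)² + (k−2)·a(n+1) − k + 1 = (a(n+1) − 1)(a(n+1) + k − 1) and a(n+1) + k − 1 = 2(a(n)+1).) -/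
/-- With `a 0 = k + 2` and `a (n+1) = 2(a n + 1) - k + 1` (`k ≥ 1`), the integer
`a(n)! * (a(n+1)² + (k-2)·a(n+1) - k + 1)` is positive and divides `a(n+1)!`, i.e.
`b_n = a(n+1)! / (a(n)! * (a(n+1)² + (k-2)·a(n+1) - k + 1))` is a positive integer. -/
theorem stmt13 (k : ℤ) (hk : 1 ≤ k) (a : ℕ → ℕ)
    (ha0 : (a 0 : ℤ) = k + 2)
    (harec : ∀ n, (a (n + 1) : ℤ) = 2 * ((a n : ℤ) + 1) - k + 1) :
    ∀ n : ℕ,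
      0 < ((a n).factorial : ℤ) *
            ((a (n + 1) : ℤ) ^ 2 + (k - 2) * (a (n + 1) : ℤ) - k + 1) ∧
      ((a n).factorial : ℤ) *
            ((a (n + 1) : ℤ) ^ 2 + (k - 2) * (a (n + 1) : ℤ) - k + 1) ∣
        ((a (n + 1)).factorial : ℤ) := by
  have hge : ∀ n, k + 2 ≤ (a n : ℤ) := by
    intro n
    induction n with
    | zero => rw [ha0]
    | succ n ih => rw [harec]; linarith
  intro n
  set A := a n with hA
  set B := a (n + 1) with hB
  have hrec := harec n
  have hAge := hge n
  have hBA : (A : ℤ) + 5 ≤ (B : ℤ) := by rw [hrec]; linarith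
  have hBAn : A + 5 ≤ B := by exact_mod_cast hBA
  have hApos : (0:ℤ) < (A:ℤ) + 1 := by positivity
  have h1 : 1 ≤ B := by omega
  have hexpr : (B : ℤ) ^ 2 + (k - 2) * (B : ℤ) - k + 1
      = (((B - 1) * (2 * (A + 1)) : ℕ) : ℤ) := by
    push_cast [Nat.cast_sub h1]
    linear_combination ((B : ℤ) - 1) * hrec
  -- factorial divisibility in ℕ
  have hdvd : A.factorial * ((B - 1) * (2 * (A + 1))) ∣ B.factorial := by
    have h2 : 2 * (A + 1).factorial ∣ (A + 3).factorial := by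
      have heq : (A + 3).factorial = (A + 1).factorial * ((A + 2) * (A + 3)) := by
        rw [Nat.factorial_succ, Nat.factorial_succ]; ring
      rw [heq, mul_comm 2 (A + 1).factorial]
      exact mul_dvd_mul_left _ ((Nat.even_mul_succ_self (A + 2)).two_dvd)
    have h3 : (A + 3).factorial ∣ (B - 2).factorial :=
      Nat.factorial_dvd_factorial (by omega)
    have h4 : (2 * (A + 1).factorial) * (B - 1) ∣ (B - 1).factorial := by
      have heq : (B - 1).factorial = (B - 2).factorial * (B - 1) := by
        have : B - 1 = (B - 2) + 1 := by omega
        rw [this, Nat.factorial_succ]; ring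
      rw [heq]
      exact mul_dvd_mul (h2.trans h3) dvd_rfl
    have h5 : (B - 1).factorial ∣ B.factorial :=
      Nat.factorial_dvd_factorial (by omega)
    have heq2 : A.factorial * ((B - 1) * (2 * (A + 1)))
        = (2 * (A + 1).factorial) * (B - 1) := by
      rw [Nat.factorial_succ]; ring
    rw [heq2]
    exact h4.trans h5
  constructor
  · rw [hexpr]
    have hp1 : 0 < A.factorial := Nat.factorial_pos A
    have hp2 : 0 < (B - 1) * (2 * (A + 1)) := Nat.mul_pos (by omega) (by omega)
    exact_mod_cast Nat.mul_pos hp1 hp2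
  · rw [hexpr]
    exact_mod_cast hdvd
end

section
/- Fix an integer k ≥ 1 and define a : ℕ → ℕ by a(0) = k + 2, a(n+1) = 2(a(n)+1) − k + 1. Let A_n ∈ M_k(ℚ) be the matrix with diagonal entries a(n) and off-diagonal entries 1, and C_n := (1/a(n)!) · A_n. Then for every n ∈ ℕ there exists a matrix B ∈ M_k(ℤ) all of whose entries are strictly positive such that C_{n+1} · B = C_n in M_k(ℚ) (where B is regarded in M_k(ℚ) via the inclusion ℤ ⊆ ℚ). -/
open Finset

theorem fac_prod (m d : ℕ) : m.factorial * ∏ i ∈ Finset.Icc (m+1) (m+d), i = (m+d).factorial := by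
  induction d with
  | zero => simp
  | succ d ih =>
    have : m + (d+1) = (m+d) + 1 := by omega
    rw [this, Finset.prod_Icc_succ_top (by omega), ← mul_assoc, ih, Nat.factorial_succ, mul_comm]

theorem key (k m M : ℕ) (hk : 1 ≤ k) (hm : k + 2 ≤ m) (hMk : M + k = 2*m + 3) :
    ∃ x y : ℕ, 0 < x ∧ 0 < y ∧
      x * (M - 1) * m.factorial = (m - 1) * M.factorial ∧
      (x + y * (2*(m+1))) * m.factorial = M.factorial := by
  obtain ⟨d, hM⟩ : ∃ d, M = m + d := ⟨M - m, by omega⟩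
  have hd5 : 5 ≤ d := by omega
  subst hM
  set s := (Finset.Icc (m+2) (m+d)).erase (m+d-1) with hs
  have hmem2 : m+2 ∈ s := by
    simp only [hs, Finset.mem_erase, Finset.mem_Icc]; omega
  have hmem3 : m+3 ∈ s := by
    simp only [hs, Finset.mem_erase, Finset.mem_Icc]; omega
  have h2 : 2 ∣ ∏ i ∈ s, i := by
    rcases Nat.even_or_odd m with ⟨t, rfl⟩ | ⟨t, rfl⟩
    · exact dvd_trans (by omega : 2 ∣ t + t + 2) (Finset.dvd_prod_of_mem (fun i => i) hmem2)
    · exact dvd_trans (by omega : 2 ∣ 2*t + 1 + 3) (Finset.dvd_prod_of_mem (fun i => i) hmem3)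
  obtain ⟨T, hT⟩ := h2
  have hTpos : 0 < T := by
    have : 0 < ∏ i ∈ s, i := Finset.prod_pos (fun i hi => by
      simp only [hs, Finset.mem_erase, Finset.mem_Icc] at hi; omega)
    omega
  have hP1 : ∏ i ∈ Finset.Icc (m+1) (m+d), i = (m+1) * ((m+d-1) * (2*T)) := by
    rw [← Finset.mul_prod_erase _ (fun i => i) (show m+1 ∈ Finset.Icc (m+1) (m+d) by
      simp only [Finset.mem_Icc]; omega)]
    congr 1
    rw [show (Finset.Icc (m+1) (m+d)).erase (m+1) = Finset.Icc (m+2) (m+d) by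
      rw [Finset.Icc_erase_left, ← Finset.Icc_add_one_left_eq_Ioc]; rfl]
    rw [← Finset.mul_prod_erase _ (fun i => i) (show m+d-1 ∈ Finset.Icc (m+2) (m+d) by
      simp only [Finset.mem_Icc]; omega)]
    rw [← hs, hT]
  have hP2 := fac_prod m d
  rw [hP1] at hP2
  obtain ⟨m', rfl⟩ : ∃ m', m = m' + 3 := ⟨m - 3, by omega⟩
  have e1 : m' + 3 + d - 1 = m' + 2 + d := by omega
  have e2 : m' + 3 - 1 = m' + 2 := by omega
  rw [e1] at hP2 ⊢
  rw [e2]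
  refine ⟨(m'+2) * ((m'+4) * (2*T)), d*T, by positivity, by positivity, ?_, ?_⟩
  · rw [← hP2]; ring
  · rw [← hP2]; ring

/-- With `a 0 = k + 2`, `a (n+1) = 2(a n + 1) - k + 1` (`k ≥ 1`), `Aₙ` the `k × k`
rational matrix with diagonal entries `a n` and off-diagonal entries `1`, and
`Cₙ = (1/a(n)!) • Aₙ`: for every `n` there is a matrix `B` with strictly positive
integer entries such that `C_{n+1} * B = C_n`. -/
theorem stmt15 (k : ℕ) (hk : 1 ≤ k) (a : ℕ → ℕ)
    (ha0 : (a 0 : ℤ) = (k : ℤ) + 2)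
    (harec : ∀ n, (a (n + 1) : ℤ) = 2 * ((a n : ℤ) + 1) - (k : ℤ) + 1) :
    ∀ n : ℕ, ∃ B : Matrix (Fin k) (Fin k) ℤ, (∀ i j, 0 < B i j) ∧
      (((a (n + 1)).factorial : ℚ)⁻¹ •
          ((a (n + 1) : ℚ) • (1 : Matrix (Fin k) (Fin k) ℚ) +
            (Matrix.of (fun _ _ => (1 : ℚ)) - 1))) *
        B.map (fun z : ℤ => (z : ℚ)) =
      ((a n).factorial : ℚ)⁻¹ •
          ((a n : ℚ) • (1 : Matrix (Fin k) (Fin k) ℚ) +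
            (Matrix.of (fun _ _ => (1 : ℚ)) - 1)) := by
  have hge : ∀ n, k + 2 ≤ a n := by
    intro n
    induction n with
    | zero => have := ha0; omega
    | succ n ih => have := harec n; omega
  have hMk : ∀ n, a (n+1) + k = 2 * a n + 3 := by
    intro n; have := harec n; have := hge n; omega
  intro n
  obtain ⟨x, y, hx, hy, E1, E2⟩ := key k (a n) (a (n+1)) hk (hge n) (hMk n)
  refine ⟨Matrix.of (fun i j => (y:ℤ) + if i = j then (x:ℤ) else 0), ?_, ?_⟩
  · intro i j; simp only [Matrix.of_apply]; split <;> omega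
  set J : Matrix (Fin k) (Fin k) ℚ := Matrix.of (fun _ _ => (1:ℚ)) with hJdef
  set m := a n with hmdef
  set M := a (n+1) with hMdef
  have hm1 : 1 ≤ m := by have := hge n; omega
  have hM1 : 1 ≤ M := by have := hge (n+1); omega
  have E1Q : (x:ℚ) * ((M:ℚ) - 1) * (m.factorial:ℚ) = ((m:ℚ) - 1) * (M.factorial:ℚ) := by
    have := congrArg (Nat.cast : ℕ → ℚ) E1
    push_cast [Nat.cast_sub hM1, Nat.cast_sub hm1] at this
    linarith [this]
  have E2Q : ((x:ℚ) + (y:ℚ) * (2*((m:ℚ)+1))) * (m.factorial:ℚ) = (M.factorial:ℚ) := by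
    have := congrArg (Nat.cast : ℕ → ℚ) E2
    push_cast at this
    linarith [this]
  have hMkQ : (M:ℚ) + (k:ℚ) = 2*(m:ℚ) + 3 := by exact_mod_cast hMk n
  have hfm : (m.factorial:ℚ) ≠ 0 := by positivity
  have hfM : (M.factorial:ℚ) ≠ 0 := by positivity
  have hBmap : (Matrix.of (fun i j => (y:ℤ) + if i = j then (x:ℤ) else 0)).map
      (fun z : ℤ => (z:ℚ)) = (x:ℚ) • 1 + (y:ℚ) • J := by
    ext i j
    by_cases h : i = j <;>
      simp [Matrix.map_apply, Matrix.one_apply, h, hJdef] <;> ring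
  have hJJ : J * J = (k:ℚ) • J := by
    ext i j
    simp [Matrix.mul_apply, hJdef]
  have key1 : (M:ℚ) • (1 : Matrix (Fin k) (Fin k) ℚ) + (J - 1) = ((M:ℚ)-1) • 1 + J := by
    rw [sub_smul, one_smul]; abel
  have key2 : (m:ℚ) • (1 : Matrix (Fin k) (Fin k) ℚ) + (J - 1) = ((m:ℚ)-1) • 1 + J := by
    rw [sub_smul, one_smul]; abel
  rw [hBmap, key1, key2, Matrix.smul_mul]
  have expand : (((M:ℚ)-1) • (1 : Matrix (Fin k) (Fin k) ℚ) + J) * ((x:ℚ) • 1 + (y:ℚ) • J)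
      = (((M:ℚ)-1)*(x:ℚ)) • 1 + ((((M:ℚ)-1)*(y:ℚ) + (x:ℚ) + (y:ℚ)*(k:ℚ))) • J := by
    rw [add_mul, mul_add, mul_add]
    simp only [Matrix.smul_mul, Matrix.mul_smul, one_mul, mul_one, smul_smul, hJJ]
    module
  rw [expand, smul_add, smul_smul, smul_smul]
  have f1 : (M.factorial:ℚ)⁻¹ * (((M:ℚ)-1)*(x:ℚ)) = (m.factorial:ℚ)⁻¹ * ((m:ℚ)-1) := by
    field_simp
    linear_combination E1Q
  have f2 : (M.factorial:ℚ)⁻¹ * (((M:ℚ)-1)*(y:ℚ) + (x:ℚ) + (y:ℚ)*(k:ℚ))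
      = (m.factorial:ℚ)⁻¹ := by
    field_simp
    linear_combination E2Q + (y:ℚ) * (m.factorial:ℚ) * hMkQ
  rw [f1, f2, smul_add, smul_smul]
end

section
/- Fix an integer k ≥ 1 and define a : ℕ → ℕ by a(0) = k + 2, a(n+1) = 2(a(n)+1) − k + 1. Let A_n ∈ M_k(ℚ) be the matrix with diagonal entries a(n) and off-diagonal entries 1, and C_n := (1/a(n)!) · A_n. Then for every vector q ∈ ℚ^k there exist n ∈ ℕ and x ∈ ℤ^k such that C_n · x = q (matrix–vector multiplication over ℚ, with x regarded in ℚ^k). In other words, ⋃_{n∈ℕ} C_n(ℤ^k) = ℚ^k. -/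
open Matrix in
/-- With `Cₙ = (1/a(n)!) • Aₙ` as before: every rational vector `q ∈ ℚ^k` is of the form
`Cₙ · x` for some `n` and some integer vector `x ∈ ℤ^k`, i.e. `⋃ₙ Cₙ(ℤ^k) = ℚ^k`. -/
theorem stmt16 (k : ℕ) (hk : 1 ≤ k) (a : ℕ → ℕ)
    (ha0 : (a 0 : ℤ) = (k : ℤ) + 2)
    (harec : ∀ n, (a (n + 1) : ℤ) = 2 * ((a n : ℤ) + 1) - (k : ℤ) + 1) :
    ∀ q : Fin k → ℚ, ∃ (n : ℕ) (x : Fin k → ℤ),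
      (((a n).factorial : ℚ)⁻¹ •
          ((a n : ℚ) • (1 : Matrix (Fin k) (Fin k) ℚ) +
            (Matrix.of (fun _ _ => (1 : ℚ)) - 1))) *ᵥ (fun i => (x i : ℚ)) = q := by
  intro q
  -- common denominator D
  set D : ℕ := ∏ i, (q i).den with hDdef
  have hDpos : 0 < D := Finset.prod_pos (fun i _ => (q i).pos)
  have hden : ∀ i, (q i).den ∣ D.factorial := fun i =>
    (Finset.dvd_prod_of_mem _ (Finset.mem_univ i)).trans (Nat.dvd_factorial hDpos le_rfl)
  -- integer numerators p with q i = p i / D!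
  set p : Fin k → ℤ := fun i => (q i).num * ((D.factorial / (q i).den : ℕ) : ℤ) with hpdef
  have hp : ∀ i, (p i : ℚ) = q i * (D.factorial : ℚ) := by
    intro i
    have h1 : (q i).den * (D.factorial / (q i).den) = D.factorial :=
      Nat.mul_div_cancel' (hden i)
    have h2 : (D.factorial : ℚ) = ((q i).den : ℚ) * ((D.factorial / (q i).den : ℕ) : ℚ) := by
      exact_mod_cast h1.symm
    have h3 : (p i : ℚ) = ((q i).num : ℚ) * ((D.factorial / (q i).den : ℕ) : ℚ) := by
      simp only [hpdef, Int.cast_mul, Int.cast_natCast]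
    rw [h3, h2, ← mul_assoc, Rat.mul_den_eq_num]
  -- growth of a
  have hgrow : ∀ n, (k : ℤ) + 2 + n ≤ (a n : ℤ) := by
    intro n
    induction n with
    | zero => simp [ha0]
    | succ n ih => rw [harec]; push_cast; omega
  set m : ℕ := a D with hmdef
  set A : ℕ := a (D + 1) with hAdef
  have hm : (k : ℤ) + 2 + D ≤ (m : ℤ) := hgrow D
  have hmN : k + 2 + D ≤ m := by exact_mod_cast hm
  have hAkZ : (A : ℤ) + k = 2 * m + 3 := by
    have := harec D
    rw [← hAdef, ← hmdef] at this
    omega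
  have hAk : A + k = 2 * m + 3 := by exact_mod_cast hAkZ
  set B : ℕ := 2 * m + 2 - k with hBdef
  have hBk : B + k = 2 * m + 2 := by omega
  have hAB : A = B + 1 := by omega
  -- divisibility: D! * (B * (2*(m+1))) ∣ A!
  have hsub : ({m + 1, m + 2, m + 3, B} : Finset ℕ) ⊆ Finset.Ico (D + 1) (A + 1) := by
    intro y hy
    simp only [Finset.mem_insert, Finset.mem_singleton] at hy
    simp only [Finset.mem_Ico]
    omega
  have hprodset : ∏ y ∈ ({m + 1, m + 2, m + 3, B} : Finset ℕ), y
      = (m + 1) * (m + 2) * (m + 3) * B := by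
    rw [Finset.prod_insert (by simp; omega), Finset.prod_insert (by simp; omega),
      Finset.prod_insert (by simp; omega), Finset.prod_singleton]
    ring
  have hfac : A.factorial = D.factorial * ∏ y ∈ Finset.Ico (D + 1) (A + 1), y := by
    rw [← Finset.prod_Ico_id_eq_factorial, ← Finset.prod_Ico_id_eq_factorial,
      Finset.prod_Ico_consecutive _ (by omega) (by omega)]
  obtain ⟨r, hr⟩ := Nat.even_mul_succ_self (m + 2)
  have hdvd1 : B * (2 * (m + 1)) ∣ (m + 1) * (m + 2) * (m + 3) * B := by
    refine ⟨r, ?_⟩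
    have : (m + 2) * (m + 3) = 2 * r := by
      have h := hr; ring_nf at h ⊢; omega
    calc (m + 1) * (m + 2) * (m + 3) * B = (m + 1) * ((m + 2) * (m + 3)) * B := by ring
      _ = (m + 1) * (2 * r) * B := by rw [this]
      _ = B * (2 * (m + 1)) * r := by ring
  have hdvd2 : D.factorial * (B * (2 * (m + 1))) ∣ A.factorial := by
    rw [hfac]
    exact mul_dvd_mul_left _ (hdvd1.trans (hprodset ▸
      Finset.prod_dvd_prod_of_subset _ _ _ hsub))
  obtain ⟨N, hN⟩ := hdvd2
  -- the integer solution
  set S : ℤ := ∑ j, p j with hSdef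
  refine ⟨D + 1, fun i => (N : ℤ) * (2 * (m + 1) * p i - S), ?_⟩
  -- rational facts
  have hFQ : (A.factorial : ℚ)
      = (D.factorial : ℚ) * ((B : ℚ) * (2 * ((m : ℚ) + 1))) * (N : ℚ) := by
    exact_mod_cast hN
  have hF0 : (A.factorial : ℚ) ≠ 0 := Nat.cast_ne_zero.mpr A.factorial_ne_zero
  have hD0 : (D.factorial : ℚ) ≠ 0 := Nat.cast_ne_zero.mpr D.factorial_ne_zero
  have hB0 : (B : ℚ) ≠ 0 := by
    have : 0 < B := by omega
    exact_mod_cast this.ne'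
  have hm0 : ((m : ℚ) + 1) ≠ 0 := by positivity
  have hN0 : (N : ℚ) ≠ 0 := by
    intro h
    rw [h, mul_zero] at hFQ
    exact hF0 hFQ
  have hcB : (A : ℚ) = (B : ℚ) + 1 := by exact_mod_cast hAB
  have hkB : (k : ℚ) = 2 * ((m : ℚ) + 1) - (B : ℚ) := by
    have : (B : ℚ) + (k : ℚ) = 2 * (m : ℚ) + 2 := by exact_mod_cast hBk
    linarith
  -- compute the matrix-vector product
  rw [← hAdef, Matrix.smul_mulVec]
  funext i
  have hkey : (((A : ℚ) • (1 : Matrix (Fin k) (Fin k) ℚ) +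
      (Matrix.of (fun _ _ => (1 : ℚ)) - 1)) *ᵥ
        (fun j => (((N : ℤ) * (2 * (m + 1) * p j - S) : ℤ) : ℚ))) i
      = ((A : ℚ) - 1) * ((N : ℚ) * (2 * ((m : ℚ) + 1) * (p i : ℚ) - (S : ℚ)))
        + ∑ j, (N : ℚ) * (2 * ((m : ℚ) + 1) * (p j : ℚ) - (S : ℚ)) := by
    rw [Matrix.add_mulVec, Matrix.sub_mulVec, Matrix.smul_mulVec, Matrix.one_mulVec]
    simp only [Pi.add_apply, Pi.sub_apply, Pi.smul_apply, smul_eq_mul,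
      Matrix.mulVec, dotProduct, Matrix.of_apply, one_mul]
    push_cast
    ring
  rw [Pi.smul_apply, hkey, smul_eq_mul]
  -- sum computation
  have hsum : ∑ j, ((N : ℚ) * (2 * ((m : ℚ) + 1) * (p j : ℚ) - (S : ℚ)))
      = (N : ℚ) * (2 * ((m : ℚ) + 1) * (S : ℚ) - (k : ℚ) * (S : ℚ)) := by
    rw [← Finset.mul_sum, Finset.sum_sub_distrib, ← Finset.mul_sum, Finset.sum_const,
      Finset.card_univ, Fintype.card_fin, nsmul_eq_mul]
    have : (S : ℚ) = ∑ j, (p j : ℚ) := by push_cast [hSdef]; rfl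
    rw [← this]
  rw [hsum, hp i]
  field_simp
  rw [hFQ, hcB, hkB]
  ring
end

section
/- Fix an integer k ≥ 1 and define a : ℕ → ℕ by a(0) = k + 2, a(n+1) = 2(a(n)+1) − k + 1. Let A_n ∈ M_k(ℚ) be the matrix with diagonal entries a(n) and off-diagonal entries 1, and C_n := (1/a(n)!) · A_n. Then for every vector q ∈ ℚ^k with q_i > 0 for all i < k, there exist n ∈ ℕ and x ∈ ℕ^k (a vector with nonnegative integer entries) such that C_n · x = q. In other words, every strictly positive rational vector lies in ⋃_{n∈ℕ} C_n(ℕ^k). -/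
open Matrix in
/-- With `Cₙ = (1/a(n)!) • Aₙ` as before: every strictly positive rational vector
`q ∈ ℚ^k` is of the form `Cₙ · x` for some `n` and some vector `x ∈ ℕ^k` with
nonnegative integer entries, i.e. it lies in `⋃ₙ Cₙ(ℕ^k)`. -/
theorem stmt17 (k : ℕ) (hk : 1 ≤ k) (a : ℕ → ℕ)
    (ha0 : (a 0 : ℤ) = (k : ℤ) + 2)
    (harec : ∀ n, (a (n + 1) : ℤ) = 2 * ((a n : ℤ) + 1) - (k : ℤ) + 1) :
    ∀ q : Fin k → ℚ, (∀ i, 0 < q i) → ∃ (n : ℕ) (x : Fin k → ℕ),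
      (((a n).factorial : ℚ)⁻¹ •
          ((a n : ℚ) • (1 : Matrix (Fin k) (Fin k) ℚ) +
            (Matrix.of (fun _ _ => (1 : ℚ)) - 1))) *ᵥ (fun i => (x i : ℚ)) = q := by
  have hge : ∀ n : ℕ, (n : ℤ) + k + 2 ≤ (a n : ℤ) := by
    intro n
    induction n with
    | zero => simp [ha0]
    | succ n ih =>
      have h := harec n
      push_cast at h ih ⊢
      omega
  intro q hq
  haveI : Nonempty (Fin k) := ⟨⟨0, hk⟩⟩
  set D : ℕ := ∏ i, (q i).den with hDdef
  have hD0 : 0 < D := Finset.prod_pos (fun i _ => (q i).pos)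
  have hdvd : ∀ i : Fin k, (q i).den ∣ D :=
    fun i => Finset.dvd_prod_of_mem _ (Finset.mem_univ i)
  set p : Fin k → ℕ := fun i => (q i).num.toNat * (D / (q i).den) with hpdef
  have hpq : ∀ i, (p i : ℚ) = q i * D := by
    intro i
    have h2 : ((q i).den : ℚ) * ((D / (q i).den : ℕ) : ℚ) = (D : ℚ) := by
      exact_mod_cast Nat.mul_div_cancel' (hdvd i)
    have h1 : ((q i).num.toNat : ℚ) = ((q i).num : ℚ) := by
      exact_mod_cast Int.toNat_of_nonneg (Rat.num_pos.mpr (hq i)).le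
    have hden0 : ((q i).den : ℚ) ≠ 0 := by exact_mod_cast (q i).den_nz
    have h3 : ((q i).num : ℚ) = q i * ((q i).den : ℚ) :=
      (div_eq_iff hden0).mp (Rat.num_div_den (q i))
    calc (p i : ℚ) = ((q i).num.toNat : ℚ) * ((D / (q i).den : ℕ) : ℚ) := by
          rw [hpdef]; push_cast; ring
      _ = q i * (((q i).den : ℚ) * ((D / (q i).den : ℕ) : ℚ)) := by rw [h1, h3]; ring
      _ = q i * D := by rw [h2]
  have hp1 : ∀ i, 1 ≤ p i := by
    intro i
    have h1 : 0 < (q i).num.toNat := by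
      have := Rat.num_pos.mpr (hq i); omega
    have h2 : 0 < D / (q i).den :=
      Nat.div_pos (Nat.le_of_dvd hD0 (hdvd i)) (q i).pos
    rw [hpdef]
    exact Nat.one_le_iff_ne_zero.mpr (Nat.mul_ne_zero (by omega) (by omega))
  set P : ℕ := ∑ i, p i with hPdef
  have hP1 : 1 ≤ P := by
    calc 1 ≤ k := hk
      _ = ∑ _i : Fin k, 1 := by simp
      _ ≤ P := Finset.sum_le_sum fun i _ => hp1 i
  set n0 : ℕ := 2 * D + P with hn0def
  set b : ℕ := a n0 with hbdef
  set m : ℕ := a (n0 + 1) with hmdef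
  have hb : 2 * D + P + k + 2 ≤ b := by
    have := hge n0
    omega
  have hm : m + k = 2 * b + 3 := by
    have := harec n0
    omega
  -- divisibility of m! by 2D * (b+1) * (m-1)
  have hsub : ({2 * D, b + 1, m - 1} : Finset ℕ) ⊆ Finset.Ico 1 (m + 1) := by
    intro y hy
    simp only [Finset.mem_insert, Finset.mem_singleton] at hy
    simp only [Finset.mem_Ico]
    rcases hy with h | h | h <;> omega
  have hprodset : ∏ y ∈ ({2 * D, b + 1, m - 1} : Finset ℕ), y
      = 2 * D * ((b + 1) * (m - 1)) := by
    rw [Finset.prod_insert (by simp; omega), Finset.prod_insert (by simp; omega),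
      Finset.prod_singleton]
  have hdv : 2 * D * ((b + 1) * (m - 1)) ∣ m.factorial := by
    rw [← hprodset, ← Finset.prod_Ico_id_eq_factorial]
    exact Finset.prod_dvd_prod_of_subset _ _ _ hsub
  obtain ⟨c, hc⟩ := hdv
  have hc0 : 0 < c := by
    rcases Nat.eq_zero_or_pos c with h | h
    · exfalso; have := Nat.factorial_pos m; rw [hc, h] at this; simp at this
    · exact h
  set x : Fin k → ℕ := fun i => c * (2 * (b + 1) * p i - P) with hxdef
  have hPle : ∀ i, P ≤ 2 * (b + 1) * p i := by
    intro i
    calc P ≤ 2 * (b + 1) * 1 := by omega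
      _ ≤ 2 * (b + 1) * p i := Nat.mul_le_mul_left _ (hp1 i)
  have hxi : ∀ i, x i + c * P = 2 * (b + 1) * c * p i := by
    intro i
    rw [hxdef]
    simp only []
    rw [← Nat.mul_add, Nat.sub_add_cancel (hPle i)]
    ring
  have hT : (∑ i, x i) + k * (c * P) = 2 * (b + 1) * c * P := by
    calc (∑ i, x i) + k * (c * P) = ∑ i, (x i + c * P) := by
          rw [Finset.sum_add_distrib, Finset.sum_const, Finset.card_univ,
            Fintype.card_fin, smul_eq_mul]
      _ = ∑ i, 2 * (b + 1) * c * p i := Finset.sum_congr rfl fun i _ => hxi i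
      _ = 2 * (b + 1) * c * P := by rw [hPdef, Finset.mul_sum]
  refine ⟨n0 + 1, x, ?_⟩
  funext i
  -- cast facts
  have hm1 : 1 ≤ m := by omega
  have E3 : (m : ℚ) + k = 2 * b + 3 := by exact_mod_cast hm
  have E4 : (m.factorial : ℚ) = 2 * D * ((b + 1) * ((m : ℚ) - 1)) * c := by
    have h := congrArg (Nat.cast (R := ℚ)) hc
    push_cast [Nat.cast_sub hm1] at h
    linarith [h]
  have E1 : (x i : ℚ) + c * P = 2 * (b + 1) * c * p i := by exact_mod_cast hxi i
  have HT : (∑ j, (x j : ℚ)) + k * (c * P) = 2 * (b + 1) * c * P := by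
    exact_mod_cast hT
  have E5 : (p i : ℚ) = q i * D := hpq i
  -- compute the matrix-vector product entry
  have hMV : (((m : ℚ) • (1 : Matrix (Fin k) (Fin k) ℚ) +
      (Matrix.of (fun _ _ => (1 : ℚ)) - 1)) *ᵥ (fun j => (x j : ℚ))) i
      = ((m : ℚ) - 1) * (x i : ℚ) + ∑ j, (x j : ℚ) := by
    simp only [Matrix.mulVec, dotProduct, Matrix.add_apply, Matrix.sub_apply,
      Matrix.smul_apply, Matrix.one_apply, Matrix.of_apply, smul_eq_mul]
    have hterm : ∀ j : Fin k,
        ((m : ℚ) * (if i = j then 1 else 0) + (1 - if i = j then 1 else 0)) * (x j : ℚ)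
        = (if i = j then ((m : ℚ) - 1) * (x j : ℚ) else 0) + (x j : ℚ) := by
      intro j
      by_cases h : i = j
      · simp [h]; ring
      · simp [h]
    rw [Finset.sum_congr rfl fun j _ => hterm j, Finset.sum_add_distrib,
      Finset.sum_ite_eq]
    simp
  have key : ((m : ℚ) - 1) * (x i : ℚ) + ∑ j, (x j : ℚ) = (m.factorial : ℚ) * q i := by
    linear_combination ((m : ℚ) - 1) * E1 + HT - (q i) * E4
      + 2 * ((b : ℚ) + 1) * ((m : ℚ) - 1) * (c : ℚ) * E5 - (c : ℚ) * (P : ℚ) * E3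
  have hfac0 : (m.factorial : ℚ) ≠ 0 := by
    exact_mod_cast (Nat.factorial_pos m).ne'
  rw [Matrix.smul_mulVec]
  simp only [Pi.smul_apply, smul_eq_mul]
  rw [hMV, key]
  field_simp
  rfl
end
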